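/- Let A and B be finite-dimensional k-algebras with A ≤_J B, and let n be a positive integer. Then T_n(A) ≤_J T_n(B), where T_n(A) denotes the k-algebra of upper triangular n×n matrices with entries in A (the subalgebra of the full n×n matrix algebra over A consisting of matrices whose (i,j) entry vanishes whenever i > j). In particular, if A ∼_J B then T_n(A) ∼_J T_n(B). -/

import Mathlib

set_option linter.unusedSectionVars false

open scoped TensorProduct
open MulOpposite

universe u

namespace JJ

noncomputable section

section BalTensor

variable (B : Type u) [Ring B] (M : Type u) [AddCommGroup M] [Module Bᵐᵒᵖ M]
  (N : Type u) [AddCommGroup N] [Module B N]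

/-- The subgroup of relations defining the balanced tensor product `M ⊗_B N`. -/
def balRel : Submodule ℤ (TensorProduct ℤ M N) :=
  Submodule.span ℤ { z | ∃ (b : B) (m : M) (n : N),
    z = (op b • m) ⊗ₜ[ℤ] n - m ⊗ₜ[ℤ] (b • n) }

/-- The balanced tensor product `M ⊗_B N` of a right `B`-module `M` and a left `B`-module `N`. -/
def BalTensor : Type u := TensorProduct ℤ M N ⧸ balRel B M N

instance : AddCommGroup (BalTensor B M N) :=
  inferInstanceAs (AddCommGroup (TensorProduct ℤ M N ⧸ balRel B M N))

/-- The canonical projection onto the balanced tensor product. -/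
def BalTensor.mk : TensorProduct ℤ M N →+ BalTensor B M N :=
  (balRel B M N).mkQ.toAddMonoidHom

/-- The image of a pure tensor in the balanced tensor product. -/
def BalTensor.tmul (m : M) (n : N) : BalTensor B M N := BalTensor.mk B M N (m ⊗ₜ n)

lemma BalTensor.mk_surjective : Function.Surjective (BalTensor.mk B M N) :=
  Submodule.mkQ_surjective _

lemma BalTensor.balance (b : B) (m : M) (n : N) :
    BalTensor.tmul B M N (op b • m) n = BalTensor.tmul B M N m (b • n) := by
  have h : ((op b • m) ⊗ₜ[ℤ] n - m ⊗ₜ[ℤ] (b • n)) ∈ balRel B M N :=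
    Submodule.subset_span ⟨b, m, n, rfl⟩
  have h2 := (Submodule.Quotient.mk_eq_zero (balRel B M N)).2 h
  rw [Submodule.Quotient.mk_sub] at h2
  exact sub_eq_zero.1 h2

end BalTensor

section LeftAction

variable (B : Type u) [Ring B] (M : Type u) [AddCommGroup M] [Module Bᵐᵒᵖ M]
  (N : Type u) [AddCommGroup N] [Module B N]
  (A : Type u) [Ring A] [Module A M] [SMulCommClass A Bᵐᵒᵖ M]

/-- The left action of `a : A` on the plain tensor product. -/
def lActAux (a : A) : TensorProduct ℤ M N →ₗ[ℤ] TensorProduct ℤ M N :=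
  LinearMap.rTensor N (DistribMulAction.toAddMonoidHom M a).toIntLinearMap

lemma lActAux_tmul (a : A) (m : M) (n : N) :
    lActAux M N A a (m ⊗ₜ n) = (a • m) ⊗ₜ n := by
  rfl

lemma lActAux_rel (a : A) :
    balRel B M N ≤ (balRel B M N).comap (lActAux M N A a) := by
  rw [balRel, Submodule.span_le]
  rintro z ⟨b, m, n, rfl⟩
  simp only [SetLike.mem_coe, Submodule.mem_comap, map_sub, lActAux_tmul]
  rw [smul_comm a (op b) m]
  exact Submodule.subset_span ⟨b, a • m, n, rfl⟩

/-- The left action of `A` on the balanced tensor product. -/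
def lAct (a : A) : BalTensor B M N →ₗ[ℤ] BalTensor B M N :=
  Submodule.mapQ _ _ (lActAux M N A a) (lActAux_rel B M N A a)

instance : SMul A (BalTensor B M N) := ⟨fun a x => lAct B M N A a x⟩

lemma BalTensor.lsmul_mk (a : A) (x : TensorProduct ℤ M N) :
    a • (BalTensor.mk B M N x) = BalTensor.mk B M N (lActAux M N A a x) := rfl

lemma BalTensor.lsmul_tmul (a : A) (m : M) (n : N) :
    a • (BalTensor.tmul B M N m n) = BalTensor.tmul B M N (a • m) n := by
  rw [BalTensor.tmul, BalTensor.lsmul_mk, lActAux_tmul]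
  rfl

instance BalTensor.instLeftModule : Module A (BalTensor B M N) where
  one_smul x := by
    obtain ⟨y, rfl⟩ := BalTensor.mk_surjective B M N x
    rw [BalTensor.lsmul_mk]
    congr 1
    have h : lActAux M N A (1 : A) = LinearMap.id :=
      TensorProduct.ext' fun m n => by show ((1 : A) • m) ⊗ₜ[ℤ] n = m ⊗ₜ[ℤ] n; rw [one_smul]
    rw [h]; rfl
  mul_smul a b x := by
    obtain ⟨y, rfl⟩ := BalTensor.mk_surjective B M N x
    rw [BalTensor.lsmul_mk, BalTensor.lsmul_mk, BalTensor.lsmul_mk]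
    congr 1
    have h : lActAux M N A (a * b) = (lActAux M N A a).comp (lActAux M N A b) :=
      TensorProduct.ext' fun m n => by
        show ((a * b) • m) ⊗ₜ[ℤ] n = (a • b • m) ⊗ₜ[ℤ] n; rw [mul_smul]
    rw [h]; rfl
  smul_zero a := map_zero (lAct B M N A a)
  smul_add a x y := map_add (lAct B M N A a) x y
  add_smul a b x := by
    obtain ⟨y, rfl⟩ := BalTensor.mk_surjective B M N x
    rw [BalTensor.lsmul_mk, BalTensor.lsmul_mk, BalTensor.lsmul_mk, ← map_add]
    congr 1
    have h : lActAux M N A (a + b) = lActAux M N A a + lActAux M N A b :=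
      TensorProduct.ext' fun m n => by
        show ((a + b) • m) ⊗ₜ[ℤ] n = (a • m) ⊗ₜ[ℤ] n + (b • m) ⊗ₜ[ℤ] n
        rw [add_smul, TensorProduct.add_tmul]
    rw [h]; rfl
  zero_smul x := by
    obtain ⟨y, rfl⟩ := BalTensor.mk_surjective B M N x
    rw [BalTensor.lsmul_mk]
    have h : lActAux M N A (0 : A) = 0 :=
      TensorProduct.ext' fun m n => by
        show ((0 : A) • m) ⊗ₜ[ℤ] n = 0; rw [zero_smul, TensorProduct.zero_tmul]
    rw [h]
    simp

end LeftAction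

section RightAction

variable (B : Type u) [Ring B] (M : Type u) [AddCommGroup M] [Module Bᵐᵒᵖ M]
  (N : Type u) [AddCommGroup N] [Module B N]
  (C : Type u) [Ring C] [Module Cᵐᵒᵖ N] [SMulCommClass B Cᵐᵒᵖ N]

/-- The right action of `c : Cᵐᵒᵖ` on the plain tensor product. -/
def rActAux (c : Cᵐᵒᵖ) : TensorProduct ℤ M N →ₗ[ℤ] TensorProduct ℤ M N :=
  LinearMap.lTensor M (DistribMulAction.toAddMonoidHom N c).toIntLinearMap

lemma rActAux_tmul (c : Cᵐᵒᵖ) (m : M) (n : N) :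
    rActAux M N C c (m ⊗ₜ n) = m ⊗ₜ (c • n) := by
  rfl

lemma rActAux_rel (c : Cᵐᵒᵖ) :
    balRel B M N ≤ (balRel B M N).comap (rActAux M N C c) := by
  rw [balRel, Submodule.span_le]
  rintro z ⟨b, m, n, rfl⟩
  simp only [SetLike.mem_coe, Submodule.mem_comap, map_sub, rActAux_tmul]
  rw [← smul_comm b c n]
  exact Submodule.subset_span ⟨b, m, c • n, rfl⟩

/-- The right action of `Cᵐᵒᵖ` on the balanced tensor product. -/
def rAct (c : Cᵐᵒᵖ) : BalTensor B M N →ₗ[ℤ] BalTensor B M N :=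
  Submodule.mapQ _ _ (rActAux M N C c) (rActAux_rel B M N C c)

instance : SMul Cᵐᵒᵖ (BalTensor B M N) := ⟨fun c x => rAct B M N C c x⟩

lemma BalTensor.rsmul_mk (c : Cᵐᵒᵖ) (x : TensorProduct ℤ M N) :
    c • (BalTensor.mk B M N x) = BalTensor.mk B M N (rActAux M N C c x) := rfl

lemma BalTensor.rsmul_tmul (c : Cᵐᵒᵖ) (m : M) (n : N) :
    c • (BalTensor.tmul B M N m n) = BalTensor.tmul B M N m (c • n) := by
  rw [BalTensor.tmul, BalTensor.rsmul_mk, rActAux_tmul]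
  rfl

instance BalTensor.instRightModule : Module Cᵐᵒᵖ (BalTensor B M N) where
  one_smul x := by
    obtain ⟨y, rfl⟩ := BalTensor.mk_surjective B M N x
    rw [BalTensor.rsmul_mk]
    congr 1
    have h : rActAux M N C (1 : Cᵐᵒᵖ) = LinearMap.id :=
      TensorProduct.ext' fun m n => by show m ⊗ₜ[ℤ] ((1 : Cᵐᵒᵖ) • n) = m ⊗ₜ[ℤ] n; rw [one_smul]
    rw [h]; rfl
  mul_smul a b x := by
    obtain ⟨y, rfl⟩ := BalTensor.mk_surjective B M N x
    rw [BalTensor.rsmul_mk, BalTensor.rsmul_mk, BalTensor.rsmul_mk]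
    congr 1
    have h : rActAux M N C (a * b) = (rActAux M N C a).comp (rActAux M N C b) :=
      TensorProduct.ext' fun m n => by
        show m ⊗ₜ[ℤ] ((a * b) • n) = m ⊗ₜ[ℤ] (a • b • n); rw [mul_smul]
    rw [h]; rfl
  smul_zero c := map_zero (rAct B M N C c)
  smul_add c x y := map_add (rAct B M N C c) x y
  add_smul a b x := by
    obtain ⟨y, rfl⟩ := BalTensor.mk_surjective B M N x
    rw [BalTensor.rsmul_mk, BalTensor.rsmul_mk, BalTensor.rsmul_mk, ← map_add]
    congr 1
    have h : rActAux M N C (a + b) = rActAux M N C a + rActAux M N C b :=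
      TensorProduct.ext' fun m n => by
        show m ⊗ₜ[ℤ] ((a + b) • n) = m ⊗ₜ[ℤ] (a • n) + m ⊗ₜ[ℤ] (b • n)
        rw [add_smul, TensorProduct.tmul_add]
    rw [h]; rfl
  zero_smul x := by
    obtain ⟨y, rfl⟩ := BalTensor.mk_surjective B M N x
    rw [BalTensor.rsmul_mk]
    have h : rActAux M N C (0 : Cᵐᵒᵖ) = 0 :=
      TensorProduct.ext' fun m n => by
        show m ⊗ₜ[ℤ] ((0 : Cᵐᵒᵖ) • n) = 0; rw [zero_smul, TensorProduct.tmul_zero]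
    rw [h]
    simp

end RightAction

section Comm

variable (B : Type u) [Ring B] (M : Type u) [AddCommGroup M] [Module Bᵐᵒᵖ M]
  (N : Type u) [AddCommGroup N] [Module B N]
  (A : Type u) [Ring A] [Module A M] [SMulCommClass A Bᵐᵒᵖ M]
  (C : Type u) [Ring C] [Module Cᵐᵒᵖ N] [SMulCommClass B Cᵐᵒᵖ N]

instance BalTensor.instSMulCommClass : SMulCommClass A Cᵐᵒᵖ (BalTensor B M N) := by
  constructor
  intro a c x
  obtain ⟨y, rfl⟩ := BalTensor.mk_surjective B M N x
  rw [BalTensor.rsmul_mk, BalTensor.lsmul_mk, BalTensor.lsmul_mk, BalTensor.rsmul_mk]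
  congr 1
  have h : (lActAux M N A a).comp (rActAux M N C c)
      = (rActAux M N C c).comp (lActAux M N A a) :=
    TensorProduct.ext' fun m n => by
      rfl
  exact DFunLike.congr_fun h y

end Comm

section BimodHom

variable (A : Type u) [Ring A] (C : Type u) [Ring C]
variable (X : Type u) [AddCommGroup X] [Module A X] [Module Cᵐᵒᵖ X]
variable (Y : Type u) [AddCommGroup Y] [Module A Y] [Module Cᵐᵒᵖ Y]

/-- A map of `(A,C)`-bimodules: additive, left `A`-equivariant and right `C`-equivariant. -/
structure IsBimodHom (f : X → Y) : Prop where
  map_add : ∀ x y, f (x + y) = f x + f y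
  map_lsmul : ∀ (a : A) (x : X), f (a • x) = a • f x
  map_rsmul : ∀ (c : Cᵐᵒᵖ) (x : X), f (c • x) = c • f x

/-- `X` is (isomorphic to) a direct summand of `Y` as an `(A,C)`-bimodule,
i.e. a retract of `Y`. -/
def IsBimodSummand : Prop :=
  ∃ (i : X → Y) (p : Y → X), IsBimodHom A C X Y i ∧ IsBimodHom A C Y X p ∧ ∀ x, p (i x) = x

end BimodHom

section Jorder

variable (k : Type u) [Field k]

/-- A finite-dimensional `(A,B)`-bimodule over `k`, whose two induced `k`-actions agree
with the given one. -/
structure BimodData (A B : Type u) [Ring A] [Ring B] [Algebra k A] [Algebra k B] :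
    Type (u + 1) where
  X : Type u
  [acg : AddCommGroup X]
  [modk : Module k X]
  [modl : Module A X]
  [modr : Module Bᵐᵒᵖ X]
  [scc : SMulCommClass A Bᵐᵒᵖ X]
  [tl : IsScalarTower k A X]
  [tr : IsScalarTower k Bᵐᵒᵖ X]
  [fd : FiniteDimensional k X]

attribute [instance] BimodData.acg BimodData.modk BimodData.modl BimodData.modr BimodData.scc
  BimodData.tl BimodData.tr BimodData.fd

variable (A B : Type u) [Ring A] [Ring B] [Algebra k A] [Algebra k B]

/-- `A ≥_J B`: there are finite-dimensional bimodules `M`, `N` such that the regular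
`A`-`A`-bimodule `A` is a direct summand of `M ⊗_B N`. -/
def Jge : Prop :=
  ∃ (M : BimodData k A B) (N : BimodData k B A),
    IsBimodSummand A A A (BalTensor B M.X N.X)

/-- `A ≤_J B`. -/
def Jle : Prop := Jge k B A

/-- `A ∼_J B`: two-sided equivalence. -/
def Jequiv : Prop := Jge k A B ∧ Jge k B A

/-- `A >_J B`: strict two-sided inequality. -/
def Jgt : Prop := Jge k A B ∧ ¬ Jge k B A

end Jorder


section Triangular

variable (k : Type u) [Field k]

/-- The algebra `T_n(A)` of upper triangular `n × n` matrices with entries in `A`,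
as a subalgebra of the full matrix algebra. -/
def upperTriangular (A : Type u) [Ring A] [Algebra k A] (n : ℕ) :
    Subalgebra k (Matrix (Fin n) (Fin n) A) where
  carrier := { M | ∀ i j : Fin n, j < i → M i j = 0 }
  mul_mem' := fun {X Y} hX hY => by
    intro i j hij
    rw [Matrix.mul_apply]
    apply Finset.sum_eq_zero
    intro l _
    rcases lt_or_ge l i with h | h
    · rw [hX i l h, zero_mul]
    · rw [hY l j (lt_of_lt_of_le hij h), mul_zero]
  add_mem' := fun {X Y} hX hY i j hij => by
    rw [Matrix.add_apply, hX i j hij, hY i j hij, add_zero]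
  one_mem' := fun i j hij => Matrix.one_apply_ne (ne_of_gt hij)
  zero_mem' := fun i j _ => rfl
  algebraMap_mem' := fun c i j hij => by
    rw [Matrix.algebraMap_matrix_apply, if_neg (ne_of_gt hij)]

instance (A : Type u) [Ring A] [Algebra k A] [FiniteDimensional k A] (n : ℕ) :
    FiniteDimensional k (↥(upperTriangular k A n)) :=
  FiniteDimensional.finiteDimensional_submodule (Subalgebra.toSubmodule (upperTriangular k A n))

end Triangular

/-! If `B` is a direct summand of `M ⊗_A N`, pick a section `i` and retraction `p`. The element
`ξ = i 1` is `B`-central and `p ξ = 1`; conversely such a pair gives back the summand, via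
`y ↦ ξ y`. For `T_n`, place `ξ` along the diagonal: writing `E_{ij}` for matrix units,
`Ξ = ∑ᵢ Eᵢᵢ m ⊗ Eᵢᵢ w` (for `ξ = m ⊗ w`, extended additively). Multiplying the matrices and
applying `p` entrywise is a `T_n(B)`-bimodule map `T_n(M) ⊗_{T_n(A)} T_n(N) → T_n(B)` sending
`Ξ` to `1`. Centrality of `Ξ` comes from the balancing relation
`E_{li} m ⊗ Eᵢᵢ w = Eₗₗ m ⊗ E_{li} w` (move `E_{li} 1 ∈ T_n(A)` across), which identifies
`b Ξ` and `Ξ b` term by term. -/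

namespace BalTensor

variable {B M N : Type u} [Ring B] [AddCommGroup M] [Module Bᵐᵒᵖ M] [AddCommGroup N] [Module B N]

lemma tmul_add (m : M) (n₁ n₂ : N) :
    tmul B M N m (n₁ + n₂) = tmul B M N m n₁ + tmul B M N m n₂ := by
  simp only [tmul, TensorProduct.tmul_add, map_add]

lemma add_tmul (m₁ m₂ : M) (n : N) :
    tmul B M N (m₁ + m₂) n = tmul B M N m₁ n + tmul B M N m₂ n := by
  simp only [tmul, TensorProduct.add_tmul, map_add]

@[simp] lemma tmul_zero (m : M) : tmul B M N m 0 = 0 := by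
  simp only [tmul, TensorProduct.tmul_zero, map_zero]

@[simp] lemma zero_tmul (n : N) : tmul B M N 0 n = 0 := by
  simp only [tmul, TensorProduct.zero_tmul, map_zero]

lemma tmul_sum {ι : Type*} (s : Finset ι) (m : M) (f : ι → N) :
    tmul B M N m (∑ i ∈ s, f i) = ∑ i ∈ s, tmul B M N m (f i) := by
  simp only [tmul, TensorProduct.tmul_sum, map_sum]

lemma sum_tmul {ι : Type*} (s : Finset ι) (f : ι → M) (n : N) :
    tmul B M N (∑ i ∈ s, f i) n = ∑ i ∈ s, tmul B M N (f i) n := by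
  simp only [tmul, TensorProduct.sum_tmul, map_sum]

@[elab_as_elim]
lemma induction_on {motive : BalTensor B M N → Prop} (z : BalTensor B M N) (zero : motive 0)
    (tmul : ∀ m n, motive (tmul B M N m n))
    (add : ∀ x y, motive x → motive y → motive (x + y)) : motive z := by
  obtain ⟨z, rfl⟩ := mk_surjective B M N z
  induction z using TensorProduct.induction_on with
  | zero => simpa only [map_zero] using zero
  | tmul m n => exact tmul m n
  | add x y hx hy => simpa only [map_add] using add _ _ hx hy

variable {P : Type*} [AddCommGroup P]

def lift (f : M →+ N →+ P) (hf : ∀ (b : B) m n, f (op b • m) n = f m (b • n)) :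
    BalTensor B M N →+ P :=
  ((balRel B M N).liftQ
    (TensorProduct.liftAddHom f fun r m n => by
      rw [map_zsmul, AddMonoidHom.smul_apply, map_zsmul]).toIntLinearMap
    (by
      rw [balRel, Submodule.span_le]
      rintro _ ⟨b, m, n, rfl⟩
      simp [hf])).toAddMonoidHom

lemma lift_tmul (f : M →+ N →+ P) (hf : ∀ (b : B) m n, f (op b • m) n = f m (b • n))
    (m : M) (n : N) : lift f hf (tmul B M N m n) = f m n :=
  rfl

end BalTensor

namespace IsBimodHom

variable {A C X Y : Type u} [Ring A] [Ring C] [AddCommGroup X] [Module A X] [Module Cᵐᵒᵖ X]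
  [AddCommGroup Y] [Module A Y] [Module Cᵐᵒᵖ Y] {f : X → Y}

def toAddMonoidHom (hf : IsBimodHom A C X Y f) : X →+ Y := AddMonoidHom.mk' f hf.map_add

end IsBimodHom

section RegularSummand

variable {B X : Type u} [Ring B] [AddCommGroup X] [Module B X] [Module Bᵐᵒᵖ X]
  [SMulCommClass B Bᵐᵒᵖ X]

theorem isBimodSummand_self_iff :
    IsBimodSummand B B B X ↔
      ∃ ξ : X, (∀ b : B, b • ξ = op b • ξ) ∧ ∃ p : X → B, IsBimodHom B B X B p ∧ p ξ = 1 := by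
  constructor
  · rintro ⟨i, p, hi, hp, hpi⟩
    refine ⟨i 1, fun b => ?_, p, hp, hpi 1⟩
    rw [← hi.map_lsmul, ← hi.map_rsmul, smul_eq_mul, op_smul_eq_mul, mul_one, one_mul]
  · rintro ⟨ξ, hξ, p, hp, hpξ⟩
    refine ⟨fun y => op y • ξ, p, ⟨fun y z => by rw [op_add, add_smul], fun b y => ?_,
      fun c y => ?_⟩, hp, fun y => ?_⟩
    · rw [smul_eq_mul, op_mul, mul_smul, ← hξ, smul_comm b (op y) ξ]
    · rw [MulOpposite.smul_eq_mul_unop, op_mul, op_unop, mul_smul]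
    · rw [hp.map_rsmul, hpξ, op_smul_eq_mul, one_mul]

end RegularSummand

section UpperTri

variable (k : Type u) [Field k] (n : ℕ) (V : Type*) [AddCommGroup V] [Module k V]

def upperTriangularSubmodule : Submodule k (Matrix (Fin n) (Fin n) V) where
  carrier := { X | ∀ i j : Fin n, j < i → X i j = 0 }
  add_mem' hX hY i j hij := by rw [Matrix.add_apply, hX i j hij, hY i j hij, add_zero]
  zero_mem' _ _ _ := rfl
  smul_mem' c X hX i j hij := by rw [Matrix.smul_apply, hX i j hij, smul_zero]

abbrev UpperTri : Type _ := upperTriangularSubmodule k n V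

instance [FiniteDimensional k V] : FiniteDimensional k (UpperTri k n V) :=
  FiniteDimensional.finiteDimensional_submodule _

variable {k n V}

variable (k) in
def upperTriangularSingle {A : Type u} [Ring A] [Algebra k A] {i j : Fin n} (h : i ≤ j) (a : A) :
    upperTriangular k A n :=
  ⟨Matrix.single i j a, fun _ _ hsr => Matrix.single_apply_of_ne _ _ _ _ _ fun ⟨hr, hs⟩ =>
    (hr ▸ hs ▸ h).not_gt hsr⟩

namespace UpperTri

@[ext] lemma ext {X Y : UpperTri k n V} (h : ∀ i j, X.1 i j = Y.1 i j) : X = Y :=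
  Subtype.ext (Matrix.ext h)

section LeftAction

variable {B : Type u} [Ring B] [Algebra k B] [Module B V]

instance : SMul (upperTriangular k B n) (UpperTri k n V) where
  smul b X := ⟨fun i j => ∑ l, b.1 i l • X.1 l j, fun i j hij =>
    Finset.sum_eq_zero fun l _ => by
      rcases lt_or_ge l i with h | h
      · rw [b.2 i l h, zero_smul]
      · rw [X.2 l j (hij.trans_le h), smul_zero]⟩

lemma smul_apply (b : upperTriangular k B n) (X : UpperTri k n V) (i j : Fin n) :
    (b • X).1 i j = ∑ l, b.1 i l • X.1 l j := rfl

instance : Module (upperTriangular k B n) (UpperTri k n V) where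
  one_smul X := by ext i j; simp [smul_apply, Matrix.one_apply, ite_smul]
  mul_smul b c X := by
    ext i j
    simp only [smul_apply, Subalgebra.coe_mul, Matrix.mul_apply, Finset.sum_smul,
      Finset.smul_sum, mul_smul]
    exact Finset.sum_comm
  smul_zero b := by ext; simp [smul_apply]
  smul_add b X Y := by ext; simp [smul_apply, Finset.sum_add_distrib]
  add_smul b c X := by ext; simp [smul_apply, add_smul, Finset.sum_add_distrib]
  zero_smul X := by ext; simp [smul_apply]

instance [IsScalarTower k B V] : IsScalarTower k (upperTriangular k B n) (UpperTri k n V) where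
  smul_assoc c b X := by ext; simp [smul_apply, Finset.smul_sum, smul_assoc]

end LeftAction

section RightAction

variable {A : Type u} [Ring A] [Algebra k A] [Module Aᵐᵒᵖ V]

instance : SMul (upperTriangular k A n)ᵐᵒᵖ (UpperTri k n V) where
  smul a X := ⟨fun i j => ∑ l, op (a.unop.1 l j) • X.1 i l, fun i j hij =>
    Finset.sum_eq_zero fun l _ => by
      rcases le_or_gt l j with h | h
      · rw [X.2 i l (h.trans_lt hij), smul_zero]
      · rw [a.unop.2 l j h, op_zero, zero_smul]⟩

lemma op_smul_apply (a : (upperTriangular k A n)ᵐᵒᵖ) (X : UpperTri k n V) (i j : Fin n) :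
    (a • X).1 i j = ∑ l, op (a.unop.1 l j) • X.1 i l := rfl

instance : Module (upperTriangular k A n)ᵐᵒᵖ (UpperTri k n V) where
  one_smul X := by ext i j; simp [op_smul_apply, Matrix.one_apply, apply_ite op, ite_smul]
  mul_smul a b X := by
    ext i j
    simp only [op_smul_apply, unop_mul, Subalgebra.coe_mul, Matrix.mul_apply, Finset.op_sum,
      op_mul, Finset.sum_smul, Finset.smul_sum, mul_smul]
    exact Finset.sum_comm
  smul_zero a := by ext; simp [op_smul_apply]
  smul_add a X Y := by ext; simp [op_smul_apply, Finset.sum_add_distrib]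
  add_smul a b X := by ext; simp [op_smul_apply, add_smul, Finset.sum_add_distrib]
  zero_smul X := by ext; simp [op_smul_apply]

instance [IsScalarTower k Aᵐᵒᵖ V] :
    IsScalarTower k (upperTriangular k A n)ᵐᵒᵖ (UpperTri k n V) where
  smul_assoc c a X := by ext; simp [op_smul_apply, Finset.smul_sum, op_smul, smul_assoc]

end RightAction

instance {A B : Type u} [Ring A] [Algebra k A] [Ring B] [Algebra k B] [Module B V]
    [Module Aᵐᵒᵖ V] [SMulCommClass B Aᵐᵒᵖ V] :
    SMulCommClass (upperTriangular k B n) (upperTriangular k A n)ᵐᵒᵖ (UpperTri k n V) where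
  smul_comm b a X := by
    ext i j
    simp only [smul_apply, op_smul_apply, Finset.smul_sum, smul_comm (b.1 _ _)]
    exact Finset.sum_comm

-- Zero unless `i ≤ j`, so that sums of matrix units over all indices need no side conditions.
variable (k) in
def single (i j : Fin n) : V →+ UpperTri k n V where
  toFun v := ⟨fun r s => if i = r ∧ j = s ∧ i ≤ j then v else 0, fun r s hsr => by
    dsimp only
    rw [if_neg]
    rintro ⟨rfl, rfl, h⟩
    exact h.not_gt hsr⟩
  map_zero' := by ext; simp
  map_add' v w := by ext; simp only [ite_add_zero]; rfl

lemma single_apply (i j : Fin n) (v : V) (r s : Fin n) :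
    (single k i j v).1 r s = if i = r ∧ j = s ∧ i ≤ j then v else 0 := rfl

lemma single_of_lt {i j : Fin n} (h : j < i) (v : V) : single k i j v = 0 := by
  ext r s
  simp [single_apply, h.not_ge]

variable {A B : Type u} [Ring A] [Algebra k A] [Ring B] [Algebra k B]

lemma smul_single_self [Module B V] (b : upperTriangular k B n) (i : Fin n) (v : V) :
    b • single k i i v = ∑ l, single k l i (b.1 l i • v) := by
  ext r s
  simp only [smul_apply, single_apply, AddSubmonoidClass.coe_finset_sum, Matrix.sum_apply]
  by_cases hri : r ≤ i
  · simp [ite_and, hri]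
  · simp [ite_and, hri, b.2 r i (not_le.1 hri)]

lemma op_smul_single_self [Module Aᵐᵒᵖ V] (a : upperTriangular k A n) (i : Fin n) (v : V) :
    op a • single k i i v = ∑ j, single k i j (op (a.1 i j) • v) := by
  ext r s
  simp only [op_smul_apply, unop_op, single_apply, AddSubmonoidClass.coe_finset_sum,
    Matrix.sum_apply]
  by_cases his : i ≤ s
  · simp [ite_and, his]
  · simp [ite_and, his, a.2 i s (not_le.1 his)]

variable {i l j : Fin n}

lemma upperTriangularSingle_smul_single [Module A V] (hil : i ≤ l) (hlj : l ≤ j) (a : A)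
    (v : V) : upperTriangularSingle k hil a • single k l j v = single k i j (a • v) := by
  ext r s
  rcases eq_or_ne i r with rfl | hr <;> rcases eq_or_ne j s with rfl | hs <;>
    simp [smul_apply, single_apply, upperTriangularSingle, Matrix.single_apply,
      hil.trans hlj, *]

lemma op_upperTriangularSingle_smul_single [Module Aᵐᵒᵖ V] (hil : i ≤ l) (hlj : l ≤ j) (a : A)
    (v : V) : op (upperTriangularSingle k hlj a) • single k i l v = single k i j (op a • v) := by
  ext r s
  rcases eq_or_ne i r with rfl | hr <;> rcases eq_or_ne j s with rfl | hs <;>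
    simp [op_smul_apply, single_apply, upperTriangularSingle, Matrix.single_apply,
      hil.trans hlj, *]

end UpperTri

end UpperTri

section TriangularTensor

variable {k : Type u} [Field k] {n : ℕ} {A : Type u} [Ring A] [Algebra k A]
  {M N : Type u} [AddCommGroup M] [Module k M] [Module Aᵐᵒᵖ M]
  [AddCommGroup N] [Module k N] [Module A N]

local notation "T⊗" => BalTensor (upperTriangular k A n) (UpperTri k n M) (UpperTri k n N)

local notation "tmulT" => BalTensor.tmul (upperTriangular k A n) (UpperTri k n M) (UpperTri k n N)

def tensorEntry (i j : Fin n) : T⊗ →+ BalTensor A M N :=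
  BalTensor.lift
    (AddMonoidHom.mk' (fun X => AddMonoidHom.mk'
      (fun Y => ∑ l, BalTensor.tmul A M N (X.1 i l) (Y.1 l j))
      fun Y Y' => by simp [BalTensor.tmul_add, Finset.sum_add_distrib])
      fun X X' => by ext Y; simp [BalTensor.add_tmul, Finset.sum_add_distrib])
    fun a X Y => by
      simp only [AddMonoidHom.mk'_apply, UpperTri.op_smul_apply, UpperTri.smul_apply, unop_op,
        BalTensor.sum_tmul, BalTensor.tmul_sum, BalTensor.balance]
      exact Finset.sum_comm

lemma tensorEntry_tmul (i j : Fin n) (X : UpperTri k n M) (Y : UpperTri k n N) :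
    tensorEntry i j (tmulT X Y) = ∑ l, BalTensor.tmul A M N (X.1 i l) (Y.1 l j) :=
  BalTensor.lift_tmul _ _ X Y

lemma tensorEntry_eq_zero_of_lt {i j : Fin n} (h : j < i) (z : T⊗) : tensorEntry i j z = 0 := by
  induction z using BalTensor.induction_on with
  | zero => exact map_zero _
  | tmul X Y =>
    refine (tensorEntry_tmul i j X Y).trans (Finset.sum_eq_zero fun l _ => ?_)
    rcases lt_or_ge l i with hl | hl
    · rw [X.2 i l hl, BalTensor.zero_tmul]
    · rw [Y.2 l j (h.trans_le hl), BalTensor.tmul_zero]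
  | add x y hx hy => rw [map_add, hx, hy, add_zero]

def singleTensor (i j : Fin n) : BalTensor A M N →+ T⊗ :=
  BalTensor.lift
    (AddMonoidHom.mk' (fun m => AddMonoidHom.mk'
      (fun w => tmulT (UpperTri.single k i i m) (UpperTri.single k i j w))
      fun w w' => by rw [map_add, BalTensor.tmul_add])
      fun m m' => by ext w; simp [BalTensor.add_tmul])
    fun a m w => by
      by_cases hij : i ≤ j
      · simp only [AddMonoidHom.mk'_apply]
        rw [← UpperTri.op_upperTriangularSingle_smul_single le_rfl le_rfl, BalTensor.balance,
          UpperTri.upperTriangularSingle_smul_single le_rfl hij]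
      · simp [UpperTri.single_of_lt (not_le.1 hij)]

lemma singleTensor_tmul (i j : Fin n) (m : M) (w : N) :
    singleTensor i j (BalTensor.tmul A M N m w)
      = tmulT (UpperTri.single k i i m) (UpperTri.single k i j w) :=
  BalTensor.lift_tmul _ _ m w

lemma tmul_single_single_self (l i : Fin n) (m : M) (w : N) :
    tmulT (UpperTri.single k l i m) (UpperTri.single k i i w)
      = singleTensor l i (BalTensor.tmul A M N m w) := by
  rw [singleTensor_tmul]
  by_cases hli : l ≤ i
  · have hm : UpperTri.single k l i m
        = op (upperTriangularSingle k hli (1 : A)) • UpperTri.single k l l m := by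
      rw [UpperTri.op_upperTriangularSingle_smul_single le_rfl hli, op_one, one_smul]
    rw [hm, BalTensor.balance, UpperTri.upperTriangularSingle_smul_single hli le_rfl, one_smul]
  · simp [UpperTri.single_of_lt (not_le.1 hli)]

lemma tensorEntry_singleTensor_self (i r s : Fin n) (z : BalTensor A M N) :
    tensorEntry r s (singleTensor i i z : T⊗) = if i = r ∧ i = s then z else 0 := by
  induction z using BalTensor.induction_on with
  | zero => simp
  | tmul m w =>
    rw [singleTensor_tmul, tensorEntry_tmul, Finset.sum_eq_single i
      (fun l _ hl => by simp [UpperTri.single_apply, Ne.symm hl]) (by simp)]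
    rcases eq_or_ne i r with rfl | hr <;> rcases eq_or_ne i s with rfl | hs <;>
      simp [UpperTri.single_apply, *]
  | add x y hx hy => rw [map_add, map_add, hx, hy, ite_add_zero]

end TriangularTensor

section TriangularBimodule

variable {k : Type u} [Field k] {n : ℕ} {A B : Type u} [Ring A] [Algebra k A] [Ring B]
  [Algebra k B] {M N : Type u} [AddCommGroup M] [Module k M] [Module B M] [Module Aᵐᵒᵖ M]
  [SMulCommClass B Aᵐᵒᵖ M] [AddCommGroup N] [Module k N] [Module A N] [Module Bᵐᵒᵖ N]
  [SMulCommClass A Bᵐᵒᵖ N]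

local notation "T⊗" => BalTensor (upperTriangular k A n) (UpperTri k n M) (UpperTri k n N)

local notation "𝒯" => upperTriangular k B n

-- `smul_zero`, `smul_add` and `Finset.smul_sum` on `T⊗` are given their type arguments:
-- unification alone does not find the `𝒯`-action on `T⊗` from the goal.

lemma smul_singleTensor_self (b : 𝒯) (i : Fin n) (z : BalTensor A M N) :
    b • (singleTensor i i z : T⊗) = ∑ l, singleTensor l i (b.1 l i • z) := by
  induction z using BalTensor.induction_on with
  | zero => simp [smul_zero (M := 𝒯) (A := T⊗)]
  | tmul m w =>
    rw [singleTensor_tmul, BalTensor.lsmul_tmul, UpperTri.smul_single_self, BalTensor.sum_tmul]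
    simp only [tmul_single_single_self, BalTensor.lsmul_tmul]
  | add x y hx hy =>
    simp only [map_add, smul_add (M := 𝒯) (A := T⊗), smul_add, hx, hy, Finset.sum_add_distrib]

lemma op_smul_singleTensor_self (b : 𝒯) (i : Fin n) (z : BalTensor A M N) :
    op b • (singleTensor i i z : T⊗) = ∑ j, singleTensor i j (op (b.1 i j) • z) := by
  induction z using BalTensor.induction_on with
  | zero => simp [smul_zero (M := 𝒯ᵐᵒᵖ) (A := T⊗)]
  | tmul m w =>
    rw [singleTensor_tmul, BalTensor.rsmul_tmul, UpperTri.op_smul_single_self, BalTensor.tmul_sum]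
    simp only [singleTensor_tmul, BalTensor.rsmul_tmul]
  | add x y hx hy =>
    simp only [map_add, smul_add (M := 𝒯ᵐᵒᵖ) (A := T⊗), smul_add, hx, hy, Finset.sum_add_distrib]

lemma tensorEntry_smul (b : 𝒯) (z : T⊗) (i j : Fin n) :
    tensorEntry i j (b • z) = ∑ t, b.1 i t • tensorEntry t j z := by
  induction z using BalTensor.induction_on with
  | zero => simp [smul_zero (M := 𝒯) (A := T⊗)]
  | tmul X Y =>
    simp only [BalTensor.lsmul_tmul, tensorEntry_tmul, UpperTri.smul_apply, BalTensor.sum_tmul,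
      Finset.smul_sum]
    exact Finset.sum_comm
  | add x y hx hy =>
    simp only [map_add, smul_add (M := 𝒯) (A := T⊗), smul_add, hx, hy, Finset.sum_add_distrib]

lemma tensorEntry_op_smul (b : 𝒯) (z : T⊗) (i j : Fin n) :
    tensorEntry i j (op b • z) = ∑ t, op (b.1 t j) • tensorEntry i t z := by
  induction z using BalTensor.induction_on with
  | zero => simp [smul_zero (M := 𝒯ᵐᵒᵖ) (A := T⊗)]
  | tmul X Y =>
    simp only [BalTensor.rsmul_tmul, tensorEntry_tmul, UpperTri.op_smul_apply, unop_op,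
      BalTensor.tmul_sum, Finset.smul_sum]
    exact Finset.sum_comm
  | add x y hx hy =>
    simp only [map_add, smul_add (M := 𝒯ᵐᵒᵖ) (A := T⊗), smul_add, hx, hy, Finset.sum_add_distrib]

def diagTensor (z : BalTensor A M N) : T⊗ := ∑ i, singleTensor i i z

lemma smul_diagTensor {z : BalTensor A M N} (hz : ∀ b : B, b • z = op b • z) (b : 𝒯) :
    b • diagTensor z = op b • (diagTensor z : T⊗) := by
  simp only [diagTensor, Finset.smul_sum (N := T⊗) (r := b),
    Finset.smul_sum (N := T⊗) (r := op b), smul_singleTensor_self, op_smul_singleTensor_self, hz]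
  exact Finset.sum_comm

def triangularMap (p : BalTensor A M N →+ B) (z : T⊗) : 𝒯 :=
  ⟨fun i j => p (tensorEntry i j z), fun i j h => by
    simp only [tensorEntry_eq_zero_of_lt h, map_zero]⟩

lemma triangularMap_apply (p : BalTensor A M N →+ B) (z : T⊗) (i j : Fin n) :
    (triangularMap p z).1 i j = p (tensorEntry i j z) :=
  rfl

lemma isBimodHom_triangularMap {p : BalTensor A M N →+ B} (hp : IsBimodHom B B _ B p) :
    IsBimodHom 𝒯 𝒯 T⊗ 𝒯 (triangularMap p) := by
  refine ⟨fun x y => ?_, fun b z => ?_, fun c z => ?_⟩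
  · ext i j
    simp only [triangularMap_apply, Subalgebra.coe_add, Matrix.add_apply, map_add]
  · ext i j
    simp only [triangularMap_apply, smul_eq_mul, Subalgebra.coe_mul, Matrix.mul_apply,
      tensorEntry_smul, map_sum, hp.map_lsmul]
  · induction c using MulOpposite.rec' with | h c => ?_
    ext i j
    simp only [triangularMap_apply, op_smul_eq_mul, Subalgebra.coe_mul, Matrix.mul_apply,
      tensorEntry_op_smul, map_sum, hp.map_rsmul]

lemma triangularMap_diagTensor {p : BalTensor A M N →+ B} {z : BalTensor A M N} (hpz : p z = 1) :
    triangularMap p (diagTensor z : T⊗) = (1 : 𝒯) := by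
  ext i j
  simp [triangularMap_apply, diagTensor, tensorEntry_singleTensor_self, Matrix.one_apply,
    apply_ite p, ite_and, hpz]

end TriangularBimodule

theorem Jge.upperTriangular {k A B : Type u} [Field k] [Ring A] [Algebra k A] [Ring B]
    [Algebra k B] (n : ℕ) (h : Jge k B A) :
    Jge k (upperTriangular k B n) (upperTriangular k A n) := by
  obtain ⟨M, N, hB⟩ := h
  obtain ⟨ξ, hξ, p, hp, hpξ⟩ := isBimodSummand_self_iff.1 hB
  exact ⟨⟨UpperTri k n M.X⟩, ⟨UpperTri k n N.X⟩, isBimodSummand_self_iff.2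
    ⟨diagTensor ξ, smul_diagTensor hξ, _, isBimodHom_triangularMap (p := hp.toAddMonoidHom) hp,
      triangularMap_diagTensor hpξ⟩⟩

theorem stmt14_general (k A B : Type u) [Field k]
    [Ring A] [Algebra k A]
    [Ring B] [Algebra k B]
    (n : ℕ) (h : Jge k B A) :
    Jge k (↥(upperTriangular k B n)) (↥(upperTriangular k A n)) ∧
    (Jequiv k A B →
      Jequiv k (↥(upperTriangular k A n)) (↥(upperTriangular k B n))) :=
  ⟨h.upperTriangular n, fun ⟨hAB, hBA⟩ => ⟨hAB.upperTriangular n, hBA.upperTriangular n⟩⟩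

/-- If `A ≤_J B` then `T_n(A) ≤_J T_n(B)` for every positive `n`;
in particular `A ∼_J B` implies `T_n(A) ∼_J T_n(B)`. -/
theorem stmt14 (k A B : Type u) [Field k]
    [Ring A] [Algebra k A] [FiniteDimensional k A]
    [Ring B] [Algebra k B] [FiniteDimensional k B]
    (n : ℕ) (hn : 0 < n) (h : Jge k B A) :
    Jge k (↥(upperTriangular k B n)) (↥(upperTriangular k A n)) ∧
    (Jequiv k A B →
      Jequiv k (↥(upperTriangular k A n)) (↥(upperTriangular k B n))) :=
  stmt14_general k A B n h

end

end JJ
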